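/- Let L = log₂3. There exists a real number α with 0 < α < 1/3 such that (1−α) + H(α) = (1/2)·H(α) + (1−α)·L and (1−α) + H(α) ≤ log₂(2.97625). (This shows that the one-parameter quantum algorithm with classical preprocessing runs in time O*(γ₁ⁿ) with γ₁ ≤ 2.97625.) -/

import Mathlib

/-- The binary entropy function `H(x) = -x·log₂ x - (1-x)·log₂(1-x)`
(with the convention `log₂ 0 = 0`, so `H(0) = H(1) = 0`). -/
noncomputable def binEntropy (x : ℝ) : ℝ :=
  -x * Real.logb 2 x - (1 - x) * Real.logb 2 (1 - x)

/-!
The equation says `H(α) = 2(1-α)(log₂ 3 - 1)`. The difference of the two sides is negative at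
`α = 749/2725` and positive at `α = 1/3`, so it has a root `α` in between. At the root the left-hand
side equals `(1-α)(2 log₂ 3 - 1) = (1-α) log₂(9/2)`, which decreases in `α` and is already at most
`log₂ 2.97625` at `α = 749/2725` (the root lies about `10⁻⁶` above the least admissible `α`).
At a rational point `m/(m+k)` one has `(m+k)·H(m/(m+k)) = log₂((m+k)^(m+k) / (m^m k^k))`, so each of
these three comparisons becomes an exact inequality between integer powers.
-/

lemma binEntropy_eq_div_log (x : ℝ) : binEntropy x = Real.binEntropy x / Real.log 2 := by
  unfold binEntropy Real.binEntropy Real.logb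
  rw [Real.log_inv, Real.log_inv]
  ring

@[fun_prop]
lemma continuous_binEntropy : Continuous binEntropy := by
  simpa only [funext binEntropy_eq_div_log] using Real.binEntropy_continuous.div_const _

lemma natCast_mul_binEntropy_div {m k n : ℕ} (hm : 0 < m) (hk : 0 < k) (hn : m + k = n) :
    (n : ℝ) * binEntropy (m / n) = Real.logb 2 ((n : ℝ) ^ n / ((m : ℝ) ^ m * (k : ℝ) ^ k)) := by
  subst hn
  push_cast
  have hm' : (0 : ℝ) < m := by exact_mod_cast hm
  have hk' : (0 : ℝ) < k := by exact_mod_cast hk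
  have hsub : 1 - (m : ℝ) / (m + k) = k / (m + k) := by field_simp; ring
  rw [binEntropy, hsub, Real.logb_div hm'.ne' (by positivity), Real.logb_div hk'.ne' (by positivity),
    Real.logb_div (by positivity) (by positivity), Real.logb_mul (by positivity) (by positivity),
    Real.logb_pow, Real.logb_pow, Real.logb_pow]
  field_simp
  push_cast
  ring

lemma binEntropy_749_div_2725_lt :
    binEntropy (749 / 2725) < 2 * (1 - 749 / 2725) * (Real.logb 2 3 - 1) := by
  have hH := natCast_mul_binEntropy_div (m := 749) (k := 1976) (n := 2725) (by norm_num)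
    (by norm_num) (by norm_num)
  push_cast at hH
  have hlt : Real.logb 2 ((2725 : ℝ) ^ 2725 / (749 ^ 749 * 1976 ^ 1976))
      < Real.logb 2 ((3 / 2) ^ 3952) := by
    refine Real.logb_lt_logb one_lt_two (by positivity) ?_
    rw [div_pow, div_lt_div_iff₀ (by positivity) (by positivity)]
    exact_mod_cast (by decide +kernel :
      2725 ^ 2725 * 2 ^ 3952 < 3 ^ 3952 * (749 ^ 749 * 1976 ^ 1976))
  rw [← hH, Real.logb_pow, Real.logb_div three_ne_zero two_ne_zero,
    Real.logb_self_eq_one one_lt_two] at hlt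
  linarith

lemma lt_binEntropy_one_third : 2 * (1 - 1 / 3) * (Real.logb 2 3 - 1) < binEntropy (1 / 3) := by
  have hH := natCast_mul_binEntropy_div (m := 1) (k := 2) (n := 3) (by norm_num)
    (by norm_num) (by norm_num)
  push_cast at hH
  have hlt : Real.logb 2 ((3 / 2) ^ 4) < Real.logb 2 ((3 : ℝ) ^ 3 / (1 ^ 1 * 2 ^ 2)) :=
    Real.logb_lt_logb one_lt_two (by positivity) (by norm_num)
  rw [← hH, Real.logb_pow, Real.logb_div three_ne_zero two_ne_zero,
    Real.logb_self_eq_one one_lt_two] at hlt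
  linarith

lemma mul_two_logb_three_sub_one_le :
    (1 - 749 / 2725) * (2 * Real.logb 2 3 - 1) ≤ Real.logb 2 2.97625 := by
  have hle : Real.logb 2 ((9 / 2) ^ 1976) ≤ Real.logb 2 (2.97625 ^ 2725) := by
    refine Real.logb_le_logb_of_le one_lt_two (by positivity) ?_
    rw [show (2.97625 : ℝ) = 2381 / 800 by norm_num, div_pow, div_pow,
      div_le_div_iff₀ (by positivity) (by positivity)]
    exact_mod_cast (by decide +kernel : 9 ^ 1976 * 800 ^ 2725 ≤ 2381 ^ 2725 * 2 ^ 1976)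
  have h9 : Real.logb 2 (9 / 2) = 2 * Real.logb 2 3 - 1 := by
    rw [Real.logb_div (by norm_num) two_ne_zero, show (9 : ℝ) = 3 ^ 2 by norm_num,
      Real.logb_pow, Real.logb_self_eq_one one_lt_two]
    push_cast
    ring
  rw [Real.logb_pow, Real.logb_pow, h9] at hle
  linarith

/-- One-parameter quantum algorithm with preprocessing: there is `0 < α < 1/3` with
`(1−α) + H(α) = H(α)/2 + (1−α)·log₂3` and `(1−α) + H(α) ≤ log₂ 2.97625`. -/
theorem stmt_13 :
    ∃ α : ℝ, 0 < α ∧ α < 1 / 3 ∧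
      (1 - α) + binEntropy α = (1 / 2) * binEntropy α + (1 - α) * Real.logb 2 3 ∧
      (1 - α) + binEntropy α ≤ Real.logb 2 2.97625 := by
  set L := Real.logb 2 3
  let g : ℝ → ℝ := fun x => binEntropy x - 2 * (1 - x) * (L - 1)
  have hg : Continuous g := by fun_prop
  obtain ⟨α, ⟨hlo, hhi⟩, hα⟩ : ∃ α ∈ Set.Ioo (749 / 2725 : ℝ) (1 / 3), g α = 0 :=
    intermediate_value_Ioo (by norm_num) hg.continuousOn
      ⟨sub_neg.mpr binEntropy_749_div_2725_lt, sub_pos.mpr lt_binEntropy_one_third⟩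
  have hL : 1 < L := by
    simpa [Real.logb_self_eq_one one_lt_two] using
      Real.logb_lt_logb (b := 2) one_lt_two two_pos (by norm_num : (2 : ℝ) < 3)
  have hroot : binEntropy α = 2 * (1 - α) * (L - 1) := sub_eq_zero.mp hα
  refine ⟨α, by linarith, hhi, by linarith, ?_⟩
  calc (1 - α) + binEntropy α = (1 - α) * (2 * L - 1) := by linarith
    _ ≤ (1 - 749 / 2725) * (2 * L - 1) := by gcongr; linarith
    _ ≤ Real.logb 2 2.97625 := mul_two_logb_three_sub_one_le
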